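/- Let r : A →R* B be a funnel reduction on a linear diagram with A collapsible, and let e : B →R C be a right exchange of two non-final vertices u and v neither of which is touched by r. Then r ; e can be rearranged as e' ; r' : A →R A' →R* C, where e' is a right exchange of u and v in A and r' is a funnel. -/
import Mathlib


/-- Combinatorial encoding of a planar string diagram. -/
structure Diagram where
  S : ℕ
  N : ℕ
  H : ℕ → ℕ
  I : ℕ → ℕ
  O : ℕ → ℕ

namespace Diagram

/-- `D.Δ n = D.O n - D.I n`, as an integer. -/
def Δ (D : Diagram) (n : ℕ) : ℤ := (D.O n : ℤ) - (D.I n : ℤ)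

/-- Number of wires at each level. -/
def W (D : Diagram) : ℕ → ℤ
  | 0 => (D.S : ℤ)
  | n + 1 => D.W n + D.Δ n

/-- A diagram is valid when there are enough edges above each vertex. -/
def Valid (D : Diagram) : Prop :=
  ∀ n < D.N, ((D.H n + D.I n : ℕ) : ℤ) ≤ D.W n

/-- `D` admits a right exchange move at height `n`. -/
def AdmitsRight (D : Diagram) (n : ℕ) : Prop :=
  n + 1 < D.N ∧ D.H n + D.O n ≤ D.H (n + 1)

/-- `D` admits a left exchange move at height `n`. -/
def AdmitsLeft (D : Diagram) (n : ℕ) : Prop :=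
  n + 1 < D.N ∧ D.H (n + 1) + D.I (n + 1) ≤ D.H n

/-- The right exchange `D_{R,n}`.  (Note `D.H (n+1) + D.I n - D.O n` is the
natural-number rendering of `D.H (n+1) - D.Δ n`, exact under admissibility.) -/
def rightExchange (D : Diagram) (n : ℕ) : Diagram where
  S := D.S
  N := D.N
  H := fun m =>
    if m = n then D.H (n + 1) + D.I n - D.O n
    else if m = n + 1 then D.H n
    else D.H m
  I := fun m => if m = n then D.I (n + 1) else if m = n + 1 then D.I n else D.I m
  O := fun m => if m = n then D.O (n + 1) else if m = n + 1 then D.O n else D.O m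

/-- The left exchange `D_{L,n}`. -/
def leftExchange (D : Diagram) (n : ℕ) : Diagram where
  S := D.S
  N := D.N
  H := fun m =>
    if m = n then D.H (n + 1)
    else if m = n + 1 then D.H n + D.O (n + 1) - D.I (n + 1)
    else D.H m
  I := fun m => if m = n then D.I (n + 1) else if m = n + 1 then D.I n else D.I m
  O := fun m => if m = n then D.O (n + 1) else if m = n + 1 then D.O n else D.O m

/-- A closed diagram: no source and no target edges. -/
def Closed (D : Diagram) : Prop := D.S = 0 ∧ D.W D.N = 0

end Diagram

open Diagram

/-- One right exchange step. -/
def RightStep (D E : Diagram) : Prop := ∃ n, D.AdmitsRight n ∧ E = D.rightExchange n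

/-- Reflexive-transitive closure of right exchange: `D →R* E`. -/
def RightRT : Diagram → Diagram → Prop := Relation.ReflTransGen RightStep

/-- A diagram admitting no right exchange move (a right normal form). -/
def IsRightNormal (D : Diagram) : Prop := ∀ n, ¬ D.AdmitsRight n

/-- `p = (h, k)` is an input position of vertex `v`. -/
def IsInput (D : Diagram) (v : ℕ) (p : ℕ × ℕ) : Prop :=
  v < D.N ∧ p.1 = v ∧ D.H v ≤ p.2 ∧ p.2 < D.H v + D.I v

/-- `p = (h, k)` is an output position of vertex `v`. -/
def IsOutput (D : Diagram) (v : ℕ) (p : ℕ × ℕ) : Prop :=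
  v < D.N ∧ p.1 = v + 1 ∧ D.H v ≤ p.2 ∧ p.2 < D.H v + D.O v

/-- The edge at position `p` persists to position `q` at the next level. -/
def Persist (D : Diagram) (p q : ℕ × ℕ) : Prop :=
  p.1 < D.N ∧ q.1 = p.1 + 1 ∧ ((p.2 : ℤ) < D.W p.1) ∧
    ((p.2 < D.H p.1 ∧ q.2 = p.2) ∨
     (D.H p.1 + D.I p.1 ≤ p.2 ∧ ((q.2 : ℤ) = (p.2 : ℤ) + D.Δ p.1)))

/-- There is a maximal edge from an output of `u` to an input of `v`. -/
def EdgeFromTo (D : Diagram) (u v : ℕ) : Prop :=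
  ∃ p q, IsOutput D u p ∧ Relation.ReflTransGen (Persist D) p q ∧ IsInput D v q

/-- Vertices `u` and `v` are adjacent: some maximal edge runs from one to the other. -/
def Adjacent (D : Diagram) (u v : ℕ) : Prop := EdgeFromTo D u v ∨ EdgeFromTo D v u

/-- A diagram is connected when any two vertices are joined by a path of adjacencies. -/
def Connected (D : Diagram) : Prop :=
  ∀ u v, u < D.N → v < D.N → Relation.ReflTransGen (Adjacent D) u v

/-- Vertex `v` is incident to a maximal edge touching the top boundary (level 0). -/
def TouchesTop (D : Diagram) (v : ℕ) : Prop :=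
  ∃ (k : ℕ) (q : ℕ × ℕ), ((k : ℤ) < D.W 0) ∧
    Relation.ReflTransGen (Persist D) (0, k) q ∧ IsInput D v q

/-- Vertex `v` is incident to a maximal edge touching the bottom boundary (level `D.N`). -/
def TouchesBottom (D : Diagram) (v : ℕ) : Prop :=
  ∃ p q, IsOutput D v p ∧ Relation.ReflTransGen (Persist D) p q ∧ q.1 = D.N

/-- A diagram is boundary-connected if it is connected, or every vertex is joined by
a path of adjacencies to a vertex incident to a maximal edge touching a boundary. -/
def BoundaryConnected (D : Diagram) : Prop :=
  Connected D ∨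
    ∀ u, u < D.N → ∃ v, (TouchesTop D v ∨ TouchesBottom D v) ∧
      Relation.ReflTransGen (Adjacent D) u v

/-- A right reduction `A →R* B` as an explicit finite sequence of right exchange steps. -/
structure Reduction (A B : Diagram) where
  len : ℕ
  seq : ℕ → Diagram
  steps : ℕ → ℕ
  src : seq 0 = A
  tgt : seq len = B
  ok : ∀ i < len, (seq i).AdmitsRight (steps i) ∧ seq (i + 1) = (seq i).rightExchange (steps i)

/-- The action of an exchange at height `n` on the heights of vertices. -/
def swapAt (n h : ℕ) : ℕ := if h = n then n + 1 else if h = n + 1 then n else h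

namespace Reduction

variable {A B : Diagram}

/-- Trajectory of the vertex starting at height `h0` along the reduction. -/
def traj (r : Reduction A B) (h0 : ℕ) : ℕ → ℕ
  | 0 => h0
  | t + 1 => swapAt (r.steps t) (r.traj h0 t)

/-- Step `t` of the reduction involves the vertex with initial height `h0`. -/
def Involves (r : Reduction A B) (h0 t : ℕ) : Prop :=
  t < r.len ∧ (r.traj h0 t = r.steps t ∨ r.traj h0 t = r.steps t + 1)

/-- Step `t` of the reduction exchanges the vertices with initial heights `h0` and `h1`. -/
def ExchangeOf (r : Reduction A B) (h0 h1 t : ℕ) : Prop :=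
  t < r.len ∧
    ((r.traj h0 t = r.steps t ∧ r.traj h1 t = r.steps t + 1) ∨
     (r.traj h1 t = r.steps t ∧ r.traj h0 t = r.steps t + 1))

/-- The configuration at step `t` is collapsible: the only vertices whose height lies
between the heights of the two final vertices are the final vertices themselves.
Here `π` numbers the vertices of `A` so that `A.N - 2` and `A.N - 1` are the finals. -/
def CollapsibleAt (r : Reduction A B) (π : ℕ → ℕ) (t : ℕ) : Prop :=
  ∀ i, i < A.N →
    min (r.traj (π (A.N - 2)) t) (r.traj (π (A.N - 1)) t) ≤ r.traj (π i) t →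
    r.traj (π i) t ≤ max (r.traj (π (A.N - 2)) t) (r.traj (π (A.N - 1)) t) →
    i = A.N - 2 ∨ i = A.N - 1

/-- The reduction is a funnel: each non-final vertex is exchanged at most once with a
final vertex, and an exchange of two non-final vertices forces both to be exchanged
with a final vertex during the reduction, with two different final vertices. -/
def IsFunnel (r : Reduction A B) (π : ℕ → ℕ) : Prop :=
  (∀ i, i < A.N - 2 → ∀ t t',
      (r.ExchangeOf (π i) (π (A.N - 2)) t ∨ r.ExchangeOf (π i) (π (A.N - 1)) t) →
      (r.ExchangeOf (π i) (π (A.N - 2)) t' ∨ r.ExchangeOf (π i) (π (A.N - 1)) t') →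
      t = t') ∧
  (∀ i j t, i < A.N - 2 → j < A.N - 2 → r.ExchangeOf (π i) (π j) t →
      ((∃ t1, r.ExchangeOf (π i) (π (A.N - 2)) t1) ∧
       (∃ t2, r.ExchangeOf (π j) (π (A.N - 1)) t2)) ∨
      ((∃ t1, r.ExchangeOf (π i) (π (A.N - 1)) t1) ∧
       (∃ t2, r.ExchangeOf (π j) (π (A.N - 2)) t2)))

/-- The reduction is collapsible: source and target are collapsible, and any exchange
between a non-final vertex and a final vertex is immediately preceded or followed by
an exchange with the other final vertex. -/
def IsCollapsibleRed (r : Reduction A B) (π : ℕ → ℕ) : Prop :=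
  r.CollapsibleAt π 0 ∧ r.CollapsibleAt π r.len ∧
  ∀ i t, i < A.N - 2 →
    (r.ExchangeOf (π i) (π (A.N - 2)) t →
      r.ExchangeOf (π i) (π (A.N - 1)) (t + 1) ∨
      (1 ≤ t ∧ r.ExchangeOf (π i) (π (A.N - 1)) (t - 1))) ∧
    (r.ExchangeOf (π i) (π (A.N - 1)) t →
      r.ExchangeOf (π i) (π (A.N - 2)) (t + 1) ∨
      (1 ≤ t ∧ r.ExchangeOf (π i) (π (A.N - 2)) (t - 1)))

/-- Cost of a reduction at weight `w`: exchanges involving the last vertex (label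
`A.N - 1`) cost `w`, all others cost `1`. -/
def cost (r : Reduction A B) (π : ℕ → ℕ) (w : ℕ) : ℕ :=
  ∑ t ∈ Finset.range r.len,
    if r.traj (π (A.N - 1)) t = r.steps t ∨ r.traj (π (A.N - 1)) t = r.steps t + 1
    then w else 1

end Reduction

/-- The maximal edge starting at output position `p` of `u` ends at an input of `v`. -/
def EdgeStartsAt (D : Diagram) (u v : ℕ) (p : ℕ × ℕ) : Prop :=
  IsOutput D u p ∧ ∃ q, Relation.ReflTransGen (Persist D) p q ∧ IsInput D v q

/-- `π` numbers the vertices of a linear diagram `D`: it is a bijection from labels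
`0, …, D.N - 1` to heights, consecutive labels (and only those) are adjacent, with
exactly one edge between consecutive vertices; labels `0` and `D.N - 1` are the leaves. -/
def IsLinear (D : Diagram) (π : ℕ → ℕ) : Prop :=
  2 ≤ D.N ∧
  Set.BijOn π (Set.Iio D.N) (Set.Iio D.N) ∧
  (∀ i j, i < D.N → j < D.N → (Adjacent D (π i) (π j) ↔ (i + 1 = j ∨ j + 1 = i))) ∧
  (∀ i, i + 1 < D.N →
    ∃! p : ℕ × ℕ, EdgeStartsAt D (π i) (π (i + 1)) p ∨ EdgeStartsAt D (π (i + 1)) (π i) p)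

/-! ### Spots, places, faces and components (for closed diagrams) -/

/-- A spot `s_{h,k}`: the gap between the `k`-th and `(k+1)`-th edge at level `h`. -/
def ValidSpot (D : Diagram) (p : ℕ × ℕ) : Prop :=
  p.1 ≤ D.N ∧ ((p.2 : ℤ) ≤ D.W p.1)

def Spot (D : Diagram) := { p : ℕ × ℕ // ValidSpot D p }

/-- Adjacency of spots at consecutive levels. -/
def SpotAdj (D : Diagram) (s t : Spot D) : Prop :=
  t.1.1 = s.1.1 + 1 ∧ s.1.1 < D.N ∧
    ((t.1.2 = s.1.2 ∧ s.1.2 ≤ D.H s.1.1) ∨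
     ((t.1.2 : ℤ) = (s.1.2 : ℤ) + D.Δ s.1.1 ∧ D.H s.1.1 + D.I s.1.1 ≤ s.1.2))

/-- Faces are equivalence classes of spots under adjacency. -/
def faceSetoid (D : Diagram) : Setoid (Spot D) := Relation.EqvGen.setoid (SpotAdj D)

def Face (D : Diagram) := Quotient (faceSetoid D)

/-- Places: either the `k`-th edge crossing level `h` (with `1 ≤ k ≤ D.W h`),
encoded `Sum.inl (h, k)`, or the vertex `v_h`, encoded `Sum.inr h`. -/
def ValidPlace (D : Diagram) : (ℕ × ℕ) ⊕ ℕ → Prop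
  | Sum.inl (h, k) => h ≤ D.N ∧ 1 ≤ k ∧ ((k : ℤ) ≤ D.W h)
  | Sum.inr v => v < D.N

def Place (D : Diagram) := { p : (ℕ × ℕ) ⊕ ℕ // ValidPlace D p }

/-- Adjacency of places: places on the same edge at consecutive levels are adjacent,
and a place at an input or output position of a vertex is adjacent to that vertex. -/
def PlaceAdjRaw (D : Diagram) : (ℕ × ℕ) ⊕ ℕ → (ℕ × ℕ) ⊕ ℕ → Prop
  | Sum.inl (h, k), Sum.inl (h', k') =>
      h' = h + 1 ∧ h < D.N ∧
        ((k' = k ∧ k ≤ D.H h) ∨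
         ((k' : ℤ) = (k : ℤ) + D.Δ h ∧ D.H h + D.I h + 1 ≤ k))
  | Sum.inl (h, k), Sum.inr v =>
      (h = v ∧ D.H v + 1 ≤ k ∧ k ≤ D.H v + D.I v) ∨
      (h = v + 1 ∧ D.H v + 1 ≤ k ∧ k ≤ D.H v + D.O v)
  | Sum.inr v, Sum.inl (h, k) =>
      (h = v ∧ D.H v + 1 ≤ k ∧ k ≤ D.H v + D.I v) ∨
      (h = v + 1 ∧ D.H v + 1 ≤ k ∧ k ≤ D.H v + D.O v)
  | Sum.inr _, Sum.inr _ => False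

def PlaceAdj (D : Diagram) (p q : Place D) : Prop := PlaceAdjRaw D p.1 q.1

/-- Components are equivalence classes of places under adjacency. -/
def compSetoid (D : Diagram) : Setoid (Place D) := Relation.EqvGen.setoid (PlaceAdj D)

def Comp (D : Diagram) := Quotient (compSetoid D)

/-- A place and a spot at the same level are neighbours when the place is immediately
to the left or to the right of the spot. -/
def NbrPS (D : Diagram) (p : Place D) (s : Spot D) : Prop :=
  ∃ h k k', p.1 = Sum.inl (h, k') ∧ s.1 = (h, k) ∧ (k' = k ∨ k' = k + 1)

/-- A component neighbours a face (`c ◊ f`). -/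
def NbrCF (D : Diagram) (c : Comp D) (f : Face D) : Prop :=
  ∃ (p : Place D) (s : Spot D),
    Quotient.mk (compSetoid D) p = c ∧ Quotient.mk (faceSetoid D) s = f ∧ NbrPS D p s

/-- A boundary spot: `s_{h,0}` or `s_{h,D.W h}`. -/
def IsBoundarySpot (D : Diagram) (s : Spot D) : Prop :=
  s.1.2 = 0 ∨ (s.1.2 : ℤ) = D.W s.1.1

/-- The face of the boundary spot `s_{0,0}`. -/
def rootFace (D : Diagram) : Face D :=
  Quotient.mk (faceSetoid D) ⟨(0, 0), Nat.zero_le _, by simp [Diagram.W]⟩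

/-- The injection `I^D_s(E)` of a closed diagram `E` at the spot `s = s_{a,k}` of `D`. -/
def inject (D : Diagram) (a k : ℕ) (E : Diagram) : Diagram where
  S := D.S
  N := D.N + E.N
  H := fun h => if h < a then D.H h else if h < a + E.N then E.H (h - a) + k else D.H (h - E.N)
  I := fun h => if h < a then D.I h else if h < a + E.N then E.I (h - a) else D.I (h - E.N)
  O := fun h => if h < a then D.O h else if h < a + E.N then E.O (h - a) else D.O (h - E.N)

section AuxLemmas

lemma swapAt_of_ne' (n h : ℕ) (h1 : h ≠ n) (h2 : h ≠ n + 1) : swapAt n h = h := by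
  simp [swapAt, h1, h2]

lemma swapAt_eq_iff' (m x y : ℕ) (h1 : y ≠ m) (h2 : y ≠ m + 1) : swapAt m x = y ↔ x = y := by
  unfold swapAt; split_ifs <;> omega

lemma swapAt_comm' (n m h : ℕ) (h1 : n ≠ m) (h2 : n + 1 ≠ m) (h3 : n ≠ m + 1) :
    swapAt n (swapAt m h) = swapAt m (swapAt n h) := by
  unfold swapAt; split_ifs <;> omega

lemma diagram_ext' {D E : Diagram} (hS : D.S = E.S) (hN : D.N = E.N)
    (hH : ∀ x, D.H x = E.H x) (hI : ∀ x, D.I x = E.I x) (hO : ∀ x, D.O x = E.O x) :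
    D = E := by
  cases D; cases E; congr 1 <;> funext x <;> simp_all

lemma reN' (D : Diagram) (n : ℕ) : (D.rightExchange n).N = D.N := rfl

lemma reH' (D : Diagram) (n x : ℕ) (h1 : x ≠ n) (h2 : x ≠ n + 1) :
    (D.rightExchange n).H x = D.H x := by simp [Diagram.rightExchange, h1, h2]

lemma reI' (D : Diagram) (n x : ℕ) (h1 : x ≠ n) (h2 : x ≠ n + 1) :
    (D.rightExchange n).I x = D.I x := by simp [Diagram.rightExchange, h1, h2]

lemma reO' (D : Diagram) (n x : ℕ) (h1 : x ≠ n) (h2 : x ≠ n + 1) :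
    (D.rightExchange n).O x = D.O x := by simp [Diagram.rightExchange, h1, h2]

lemma rightExchange_comm' (D : Diagram) (n m : ℕ)
    (h1 : n ≠ m) (h2 : n + 1 ≠ m) (h3 : n ≠ m + 1) :
    (D.rightExchange n).rightExchange m = (D.rightExchange m).rightExchange n := by
  refine diagram_ext' rfl rfl ?_ ?_ ?_ <;>
    intro x <;> simp only [Diagram.rightExchange] <;> split_ifs <;> first | rfl | omega

end AuxLemmas


lemma exists_commuted_reduction {A B : Diagram} (r : Reduction A B) (m : ℕ)
    (hsteps : ∀ t, t < r.len → r.steps t ≠ m ∧ r.steps t + 1 ≠ m ∧ r.steps t ≠ m + 1) :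
    ∃ r' : Reduction (A.rightExchange m) (B.rightExchange m),
      r'.len = r.len ∧ r'.steps = r.steps ∧
      ∀ h0 t, t ≤ r.len → r'.traj (swapAt m h0) t = swapAt m (r.traj h0 t) := by
  refine ⟨⟨r.len, fun t => (r.seq t).rightExchange m, r.steps,
    by show (r.seq 0).rightExchange m = A.rightExchange m; rw [r.src],
    by show (r.seq r.len).rightExchange m = B.rightExchange m; rw [r.tgt], ?_⟩, rfl, rfl, ?_⟩
  · intro i hi
    obtain ⟨s1, s2, s3⟩ := hsteps i hi
    obtain ⟨⟨hlt, hle⟩, hstep⟩ := r.ok i hi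
    have s4 : r.steps i + 1 ≠ m + 1 := by omega
    constructor
    · show ((r.seq i).rightExchange m).AdmitsRight (r.steps i)
      refine ⟨hlt, ?_⟩
      rw [reH' _ m _ s1 s3, reO' _ m _ s1 s3, reH' _ m _ s2 s4]
      exact hle
    · show (r.seq (i + 1)).rightExchange m = ((r.seq i).rightExchange m).rightExchange (r.steps i)
      rw [hstep, rightExchange_comm' (r.seq i) (r.steps i) m s1 s2 s3]
  · intro h0 t
    induction t with
    | zero => intro _; rfl
    | succ t ih =>
      intro ht
      have ht' : t < r.len := ht
      obtain ⟨s1, s2, s3⟩ := hsteps t ht'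
      simp only [Reduction.traj]
      rw [ih (le_of_lt ht')]
      exact swapAt_comm' (r.steps t) m _ s1 s2 s3

/-- a funnel reduction with collapsible source followed by an exchange of
two non-final vertices untouched by the reduction can be rearranged so that the
exchange happens first, followed by a funnel. -/
theorem funnel_commute_untouched_exchange {A B : Diagram} (π : ℕ → ℕ) (r : Reduction A B)
    (hlin : IsLinear A π) (hcol : r.CollapsibleAt π 0) (hfun : r.IsFunnel π)
    (u v : ℕ) (hu : u < A.N - 2) (hv : v < A.N - 2) (m : ℕ)
    (hadm : B.AdmitsRight m)
    (hpos : (r.traj (π u) r.len = m ∧ r.traj (π v) r.len = m + 1) ∨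
            (r.traj (π v) r.len = m ∧ r.traj (π u) r.len = m + 1))
    (huntouched : ∀ t, ¬ r.Involves (π u) t ∧ ¬ r.Involves (π v) t) :
    ∃ m', A.AdmitsRight m' ∧
      ((π u = m' ∧ π v = m' + 1) ∨ (π v = m' ∧ π u = m' + 1)) ∧
      ∃ r' : Reduction (A.rightExchange m') (B.rightExchange m),
        r'.IsFunnel (fun i => swapAt m' (π i)) ∧ r'.len = r.len := by
  have hcu : ∀ t, t ≤ r.len → r.traj (π u) t = π u := by
    intro t
    induction t with
    | zero => intro _; rfl
    | succ t ih =>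
      intro ht
      have ht' : t < r.len := ht
      have h1 := (huntouched t).1
      unfold Reduction.Involves at h1
      push_neg at h1
      have h2 := h1 ht'
      rw [ih (le_of_lt ht')] at h2
      simp only [Reduction.traj]
      rw [ih (le_of_lt ht')]
      exact swapAt_of_ne' _ _ h2.1 h2.2
  have hcv : ∀ t, t ≤ r.len → r.traj (π v) t = π v := by
    intro t
    induction t with
    | zero => intro _; rfl
    | succ t ih =>
      intro ht
      have ht' : t < r.len := ht
      have h1 := (huntouched t).2
      unfold Reduction.Involves at h1
      push_neg at h1
      have h2 := h1 ht'
      rw [ih (le_of_lt ht')] at h2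
      simp only [Reduction.traj]
      rw [ih (le_of_lt ht')]
      exact swapAt_of_ne' _ _ h2.1 h2.2
  have huv : (π u = m ∧ π v = m + 1) ∨ (π v = m ∧ π u = m + 1) := by
    rw [hcu r.len le_rfl, hcv r.len le_rfl] at hpos
    exact hpos
  have hsteps : ∀ t, t < r.len → r.steps t ≠ m ∧ r.steps t + 1 ≠ m ∧ r.steps t ≠ m + 1 := by
    intro t ht
    have h1 := (huntouched t).1
    have h2 := (huntouched t).2
    unfold Reduction.Involves at h1 h2
    push_neg at h1 h2
    obtain ⟨a1, a2⟩ := h1 ht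
    obtain ⟨b1, b2⟩ := h2 ht
    rw [hcu t (le_of_lt ht)] at a1 a2
    rw [hcv t (le_of_lt ht)] at b1 b2
    rcases huv with ⟨c1, c2⟩ | ⟨c1, c2⟩ <;> exact ⟨by omega, by omega, by omega⟩
  have hinv : ∀ t, t ≤ r.len → (r.seq t).N = A.N ∧ (r.seq t).H m = A.H m ∧
      (r.seq t).H (m + 1) = A.H (m + 1) ∧ (r.seq t).O m = A.O m := by
    intro t
    induction t with
    | zero => intro _; rw [r.src]; exact ⟨rfl, rfl, rfl, rfl⟩
    | succ t ih =>
      intro ht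
      have ht' : t < r.len := ht
      obtain ⟨hN, hH1, hH2, hO1⟩ := ih (le_of_lt ht')
      obtain ⟨_, hstep⟩ := r.ok t ht'
      obtain ⟨s1, s2, s3⟩ := hsteps t ht'
      have m1 : m ≠ r.steps t := fun h => s1 h.symm
      have m2 : m ≠ r.steps t + 1 := fun h => s2 h.symm
      have m3 : m + 1 ≠ r.steps t := fun h => s3 h.symm
      have m4 : m + 1 ≠ r.steps t + 1 := by omega
      rw [hstep]
      exact ⟨hN, by rw [reH' _ _ _ m1 m2]; exact hH1,
        by rw [reH' _ _ _ m3 m4]; exact hH2,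
        by rw [reO' _ _ _ m1 m2]; exact hO1⟩
  have hAadm : A.AdmitsRight m := by
    obtain ⟨hN, hH1, hH2, hO1⟩ := hinv r.len le_rfl
    rw [r.tgt] at hN hH1 hH2 hO1
    obtain ⟨b1, b2⟩ := hadm
    refine ⟨by omega, ?_⟩
    rw [← hH1, ← hH2, ← hO1]
    exact b2
  obtain ⟨r', hlen, hst, htraj⟩ := exists_commuted_reduction r m hsteps
  have hex : ∀ h0 h1 t, r'.ExchangeOf (swapAt m h0) (swapAt m h1) t ↔ r.ExchangeOf h0 h1 t := by
    intro h0 h1 t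
    unfold Reduction.ExchangeOf
    rw [hlen, hst]
    constructor
    · rintro ⟨ht, h⟩
      obtain ⟨s1, s2, s3⟩ := hsteps t ht
      have s4 : r.steps t + 1 ≠ m + 1 := by omega
      rw [htraj h0 t (le_of_lt ht), htraj h1 t (le_of_lt ht)] at h
      rw [swapAt_eq_iff' m (r.traj h0 t) (r.steps t) s1 s3,
          swapAt_eq_iff' m (r.traj h1 t) (r.steps t + 1) s2 s4,
          swapAt_eq_iff' m (r.traj h1 t) (r.steps t) s1 s3,
          swapAt_eq_iff' m (r.traj h0 t) (r.steps t + 1) s2 s4] at h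
      exact ⟨ht, h⟩
    · rintro ⟨ht, h⟩
      obtain ⟨s1, s2, s3⟩ := hsteps t ht
      have s4 : r.steps t + 1 ≠ m + 1 := by omega
      refine ⟨ht, ?_⟩
      rw [htraj h0 t (le_of_lt ht), htraj h1 t (le_of_lt ht),
          swapAt_eq_iff' m (r.traj h0 t) (r.steps t) s1 s3,
          swapAt_eq_iff' m (r.traj h1 t) (r.steps t + 1) s2 s4,
          swapAt_eq_iff' m (r.traj h1 t) (r.steps t) s1 s3,
          swapAt_eq_iff' m (r.traj h0 t) (r.steps t + 1) s2 s4]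
      exact h
  refine ⟨m, hAadm, huv, r', ?_, hlen⟩
  unfold Reduction.IsFunnel at hfun ⊢
  simp only [reN', hex]
  exact hfun
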